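/- arXiv:1310.8542 — 2 statements merged into one kernel-verified Lean document; each statement's English description precedes it below -/
import Mathlib

section
/- Let U and Q be subspaces of ℝⁿ with dim(U) = dim(Q). Then there exists a symmetric linear map B: ℝⁿ → ℝⁿ such that the orthogonal projection onto Q of B(U) equals Q (equivalently, π_Q(B(U)) = Q). -/
/-!
Let `P` be the orthogonal projection onto `Q`. When `dim U = dim Q`, the subspaces `U ⊓ Qᗮ` and
`Q ⊓ Uᗮ` have equal dimension, so some `D` maps the first isomorphically onto the second and
vanishes on its orthogonal complement. Take `B = P + D + D†`: as `D†` takes values in `Qᗮ`,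
`P B = P + D`. This is injective on `U`, because `D u ∈ Q ⊓ Uᗮ` is orthogonal to `P u`, so
`P u + D u = 0` forces `P u = 0`, i.e. `u ∈ U ⊓ Qᗮ`, where `D` is injective. Counting dimensions,
`P (B U) = Q`.
-/

open Module Submodule

theorem Submodule.map_eq_of_le_of_disjoint_ker {K V W : Type*} [Field K] [AddCommGroup V]
    [Module K V] [AddCommGroup W] [Module K W] [FiniteDimensional K W]
    {U : Submodule K V} {Q : Submodule K W} {f : V →ₗ[K] W} (hle : U.map f ≤ Q)
    (hf : Disjoint U (LinearMap.ker f)) (h : finrank K U = finrank K Q) : U.map f = Q := by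
  refine eq_of_le_of_finrank_eq hle ?_
  rw [← LinearMap.range_domRestrict,
    LinearMap.finrank_range_of_inj (LinearMap.injective_domRestrict_iff.mpr hf), h]

variable {𝕜 E : Type*} [RCLike 𝕜] [NormedAddCommGroup E] [InnerProductSpace 𝕜 E]

theorem Submodule.finrank_inf_orthogonal_add_finrank [FiniteDimensional 𝕜 E]
    (U Q : Submodule 𝕜 E) :
    finrank 𝕜 ↥(U ⊓ Qᗮ) + finrank 𝕜 Q = finrank 𝕜 ↥(Q ⊓ Uᗮ) + finrank 𝕜 U := by
  have hsup := finrank_sup_add_finrank_inf_eq U Qᗮ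
  have hQ := Q.finrank_add_finrank_orthogonal
  have hperp := (U ⊔ Qᗮ).finrank_add_finrank_orthogonal
  rw [← inf_orthogonal, orthogonal_orthogonal, inf_comm] at hperp
  omega

theorem Submodule.exists_clm_ker_orthogonal_of_finrank_eq {K₁ K₂ : Submodule 𝕜 E}
    [FiniteDimensional 𝕜 K₁] [FiniteDimensional 𝕜 K₂] (h : finrank 𝕜 K₁ = finrank 𝕜 K₂) :
    ∃ D : E →L[𝕜] E, (∀ x, D x ∈ K₂) ∧ (∀ x ∈ K₁ᗮ, D x = 0) ∧
      Disjoint K₁ (LinearMap.ker (D : E →ₗ[𝕜] E)) := by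
  let e : K₁ ≃L[𝕜] K₂ := (LinearEquiv.ofFinrankEq _ _ h).toContinuousLinearEquiv
  refine ⟨K₂.subtypeL ∘L (e : K₁ →L[𝕜] K₂) ∘L K₁.orthogonalProjectionOnto, fun x => (e _).2,
    fun x hx => by simp [orthogonalProjectionOnto_eq_zero_iff.mpr hx], ?_⟩
  refine LinearMap.disjoint_ker.mpr fun u hu hDu => ?_
  have : e ⟨u, hu⟩ = 0 := by
    simpa [orthogonalProjectionOnto_mem_subspace_eq_self ⟨u, hu⟩] using hDu
  simpa using e.map_eq_zero_iff.mp this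

section

variable {Q : Submodule 𝕜 E} [Q.HasOrthogonalProjection]

theorem Submodule.disjoint_ker_starProjection_add {U : Submodule 𝕜 E} {D : E →L[𝕜] E}
    (hrange : ∀ x, D x ∈ Q ⊓ Uᗮ) (hinj : Disjoint (U ⊓ Qᗮ) (LinearMap.ker (D : E →ₗ[𝕜] E))) :
    Disjoint U (LinearMap.ker (Q.starProjection + D : E →ₗ[𝕜] E)) := by
  rw [LinearMap.disjoint_ker] at hinj ⊢
  intro u hu h0
  have hDu : D u = -Q.starProjection u := eq_neg_of_add_eq_zero_right h0
  have horth : inner 𝕜 (Q.starProjection u) (D u) = 0 := by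
    rw [inner_starProjection_left_eq_right, starProjection_eq_self_iff.mpr (hrange u).1]
    exact (hrange u).2 u hu
  have hPu : Q.starProjection u = 0 := by
    rwa [hDu, inner_neg_right, neg_eq_zero, inner_self_eq_zero] at horth
  refine hinj u ⟨hu, Q.starProjection_apply_eq_zero_iff.mp hPu⟩ ?_
  simp [hDu, hPu]

theorem Submodule.starProjection_comp_add_add_adjoint [CompleteSpace E] {D : E →L[𝕜] E}
    (hrange : ∀ x, D x ∈ Q) (hker : ∀ q ∈ Q, D q = 0) :
    Q.starProjection ∘L (Q.starProjection + D + D.adjoint) = Q.starProjection + D := by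
  have hadj : ∀ x, D.adjoint x ∈ Qᗮ := fun x q hq => by
    rw [ContinuousLinearMap.adjoint_inner_right, hker q hq, inner_zero_left]
  ext x
  simp only [ContinuousLinearMap.comp_apply, add_apply, map_add,
    starProjection_eq_self_iff.mpr (hrange x), Q.starProjection_apply_eq_zero_iff.mpr (hadj x),
    starProjection_eq_self_iff.mpr (Q.starProjection_apply_mem x), add_zero]

end

theorem Submodule.exists_isSymmetric_map_map_starProjection_eq [FiniteDimensional 𝕜 E]
    (U Q : Submodule 𝕜 E) (h : finrank 𝕜 U = finrank 𝕜 Q) :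
    ∃ B : E →ₗ[𝕜] E, B.IsSymmetric ∧ (U.map B).map Q.starProjection.toLinearMap = Q := by
  have : CompleteSpace E := FiniteDimensional.complete 𝕜 E
  obtain ⟨D, hrange, hker, hinj⟩ := exists_clm_ker_orthogonal_of_finrank_eq (K₁ := U ⊓ Qᗮ)
    (K₂ := Q ⊓ Uᗮ) (by have := finrank_inf_orthogonal_add_finrank U Q; omega)
  have hQ (q : E) (hq : q ∈ Q) : D q = 0 :=
    hker q fun k hk => inner_left_of_mem_orthogonal hq hk.2
  have hB : IsSelfAdjoint (Q.starProjection + D + D.adjoint) := by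
    rw [add_assoc, ← ContinuousLinearMap.star_eq_adjoint]
    exact (isSelfAdjoint_starProjection Q).add (IsSelfAdjoint.add_star_self D)
  refine ⟨_, hB.isSymmetric, ?_⟩
  rw [← map_comp, ← ContinuousLinearMap.toLinearMap_comp,
    starProjection_comp_add_add_adjoint (fun x => (hrange x).1) hQ]
  refine map_eq_of_le_of_disjoint_ker ?_ (disjoint_ker_starProjection_add hrange hinj) h
  rintro _ ⟨x, -, rfl⟩
  exact Q.add_mem (Q.starProjection_apply_mem x) (hrange x).1

theorem stmt5 (n : ℕ) (U Q : Submodule ℝ (EuclideanSpace ℝ (Fin n)))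
    (h : Module.finrank ℝ U = Module.finrank ℝ Q) :
    ∃ B : EuclideanSpace ℝ (Fin n) →ₗ[ℝ] EuclideanSpace ℝ (Fin n), B.IsSymmetric ∧
      Submodule.map ((Q.subtypeL.comp Q.orthogonalProjectionOnto).toLinearMap) (U.map B) = Q :=
  exists_isSymmetric_map_map_starProjection_eq U Q h
end

section
/- For every α > 0 and every matrix M ∈ GL⁺(2,ℝ) having two distinct real eigendirections E₁, E₂ whose angle is less than α, there exists s ∈ [-1,1] such that R^(sα) ∘ M has a non-real (complex) eigenvalue, where R^θ denotes rotation by angle θ. -/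
/-!
Orient the eigenvectors so that `det (u, w) > 0` and let `β` be their angle. The rotation
`R^β` carries the line of `u` onto the line of `w`, so in the basis `(u, w)` the matrix of
`R^β M` has diagonal `(0, 2 λ₂ cos β)`; likewise `tr (R^{-β} M) = 2 λ₁ cos β`. Since
`det (R^θ M) = λ₁ λ₂ > 0`, choosing the eigenvalue `λ` of smaller modulus gives
`tr² = 4 λ² cos² β < 4 λ² ≤ 4 λ₁ λ₂ = 4 det`, so the rotated matrix has negative discriminant.
-/

open Matrix

/-- Angle between two nonzero vectors of `ℝ²` (standard inner product). -/
noncomputable def vecAngle (u w : Fin 2 → ℝ) : ℝ :=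
  Real.arccos ((u ⬝ᵥ w) / (Real.sqrt (u ⬝ᵥ u) * Real.sqrt (w ⬝ᵥ w)))

namespace Matrix

theorem exists_im_ne_zero_mem_spectrum_of_sq_trace_lt (A : Matrix (Fin 2) (Fin 2) ℝ)
    (h : A.trace ^ 2 < 4 * A.det) :
    ∃ z : ℂ, z.im ≠ 0 ∧ z ∈ spectrum ℂ (A.map (algebraMap ℝ ℂ)) := by
  set s := √(4 * A.det - A.trace ^ 2)
  have hs0 : 0 < s := Real.sqrt_pos.2 (sub_pos.2 h)
  have hs : ((s ^ 2 : ℝ) : ℂ) = ((4 * A.det - A.trace ^ 2 : ℝ) : ℂ) :=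
    congrArg _ (Real.sq_sqrt (sub_pos.2 h).le)
  push_cast at hs
  refine ⟨(A.trace + s * Complex.I) / 2, by simpa using hs0.ne', ?_⟩
  rw [mem_spectrum_iff_isRoot_charpoly, charpoly_map, charpoly_fin_two, Polynomial.IsRoot.def,
    Polynomial.eval_map_algebraMap]
  simp only [map_add, map_sub, map_mul, map_pow, Polynomial.aeval_X, Polynomial.aeval_C,
    Complex.coe_algebraMap]
  linear_combination (s ^ 2 / 4 : ℂ) * Complex.I_sq - (1 / 4 : ℂ) * hs

section Eigenvectors

variable {R : Type*} [CommRing R] {M : Matrix (Fin 2) (Fin 2) R} {u w : Fin 2 → R} {l₁ l₂ : R}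

theorem det_of_fin_two (u w : Fin 2 → R) : (of ![u, w]).det = u 0 * w 1 - u 1 * w 0 := by
  simp [det_fin_two]

theorem mulVec_fin_two_eq_smul (h : M *ᵥ u = l₁ • u) :
    M 0 0 * u 0 + M 0 1 * u 1 = l₁ * u 0 ∧ M 1 0 * u 0 + M 1 1 * u 1 = l₁ * u 1 := by
  simpa [mulVec, dotProduct, Fin.sum_univ_two, funext_iff, Fin.forall_fin_two] using h

variable (hu : M *ᵥ u = l₁ • u) (hw : M *ᵥ w = l₂ • w)
include hu hw

theorem det_of_mul_trace_of_mulVec_eq_smul :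
    (of ![u, w]).det * M.trace = (of ![u, w]).det * (l₁ + l₂) := by
  obtain ⟨hu₀, hu₁⟩ := mulVec_fin_two_eq_smul hu
  obtain ⟨hw₀, hw₁⟩ := mulVec_fin_two_eq_smul hw
  rw [det_of_fin_two, trace_fin_two]
  linear_combination w 1 * hu₀ - u 1 * hw₀ - w 0 * hu₁ + u 0 * hw₁

theorem det_of_mul_sub_of_mulVec_eq_smul :
    (of ![u, w]).det * (M 0 1 - M 1 0) = (l₂ - l₁) * (u ⬝ᵥ w) := by
  obtain ⟨hu₀, hu₁⟩ := mulVec_fin_two_eq_smul hu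
  obtain ⟨hw₀, hw₁⟩ := mulVec_fin_two_eq_smul hw
  rw [det_of_fin_two, dotProduct, Fin.sum_univ_two]
  linear_combination -w 0 * hu₀ + u 0 * hw₀ - w 1 * hu₁ + u 1 * hw₁

theorem det_eq_mul_of_mulVec_eq_smul [IsDomain R] (hP : (of ![u, w]).det ≠ 0) :
    M.det = l₁ * l₂ := by
  have hMU : M * (of ![u, w])ᵀ = (of ![u, w])ᵀ * diagonal ![l₁, l₂] := by
    ext i j
    fin_cases j
    · simpa [mul_apply, mulVec, dotProduct, mul_comm] using congrFun hu i
    · simpa [mul_apply, mulVec, dotProduct, mul_comm] using congrFun hw i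
  refine mul_left_cancel₀ hP ?_
  simpa [det_mul, mul_comm] using congrArg det hMU

end Eigenvectors

end Matrix

noncomputable def rotationMatrix (θ : ℝ) : Matrix (Fin 2) (Fin 2) ℝ :=
  !![Real.cos θ, -Real.sin θ; Real.sin θ, Real.cos θ]

theorem det_rotationMatrix_mul (θ : ℝ) (M : Matrix (Fin 2) (Fin 2) ℝ) :
    (rotationMatrix θ * M).det = M.det := by
  rw [det_mul, rotationMatrix, det_fin_two_of]
  linear_combination M.det * Real.cos_sq_add_sin_sq θ

theorem trace_rotationMatrix_mul (θ : ℝ) (M : Matrix (Fin 2) (Fin 2) ℝ) :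
    (rotationMatrix θ * M).trace = Real.cos θ * M.trace + Real.sin θ * (M 0 1 - M 1 0) := by
  simp only [rotationMatrix, trace_fin_two, mul_apply, Fin.sum_univ_two, of_apply, cons_val_zero,
    cons_val_one, cons_val', empty_val', cons_val_fin_one]
  ring

section Angle

variable {u w : Fin 2 → ℝ}

theorem vecAngle_comm (u w : Fin 2 → ℝ) : vecAngle u w = vecAngle w u := by
  rw [vecAngle, vecAngle, dotProduct_comm, mul_comm]

theorem sq_sqrt_mul_sqrt_dotProduct_self (u w : Fin 2 → ℝ) :
    (√(u ⬝ᵥ u) * √(w ⬝ᵥ w)) ^ 2 = (u ⬝ᵥ w) ^ 2 + (of ![u, w]).det ^ 2 := by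
  have huu : 0 ≤ u ⬝ᵥ u := by simpa using dotProduct_star_self_nonneg u
  have hww : 0 ≤ w ⬝ᵥ w := by simpa using dotProduct_star_self_nonneg w
  rw [mul_pow, Real.sq_sqrt huu, Real.sq_sqrt hww, det_of_fin_two]
  simp only [dotProduct, Fin.sum_univ_two]
  ring

theorem sqrt_mul_sqrt_dotProduct_self_pos (hP : (of ![u, w]).det ≠ 0) :
    0 < √(u ⬝ᵥ u) * √(w ⬝ᵥ w) := by
  refine (by positivity : (0 : ℝ) ≤ _).lt_of_ne fun h ↦ hP ?_
  have := sq_sqrt_mul_sqrt_dotProduct_self u w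
  rw [← h] at this
  nlinarith [sq_nonneg (u ⬝ᵥ w)]

theorem cos_vecAngle (hP : (of ![u, w]).det ≠ 0) :
    Real.cos (vecAngle u w) = (u ⬝ᵥ w) / (√(u ⬝ᵥ u) * √(w ⬝ᵥ w)) := by
  have hN := sqrt_mul_sqrt_dotProduct_self_pos hP
  have hle : |u ⬝ᵥ w| ≤ √(u ⬝ᵥ u) * √(w ⬝ᵥ w) := by
    refine abs_le_of_sq_le_sq ?_ hN.le
    rw [sq_sqrt_mul_sqrt_dotProduct_self]
    nlinarith [sq_nonneg (of ![u, w]).det]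
  rw [← div_le_one hN, ← abs_of_pos hN, ← abs_div] at hle
  exact Real.cos_arccos (abs_le.1 hle).1 (abs_le.1 hle).2

theorem sin_vecAngle (hP : (of ![u, w]).det ≠ 0) :
    Real.sin (vecAngle u w) = |(of ![u, w]).det| / (√(u ⬝ᵥ u) * √(w ⬝ᵥ w)) := by
  have hN := sqrt_mul_sqrt_dotProduct_self_pos hP
  have hsq : 1 - ((u ⬝ᵥ w) / (√(u ⬝ᵥ u) * √(w ⬝ᵥ w))) ^ 2
      = ((of ![u, w]).det / (√(u ⬝ᵥ u) * √(w ⬝ᵥ w))) ^ 2 := by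
    have hN2 := sq_sqrt_mul_sqrt_dotProduct_self u w
    generalize √(u ⬝ᵥ u) * √(w ⬝ᵥ w) = N at hN hN2 ⊢
    field_simp
    linear_combination hN2
  rw [vecAngle, Real.sin_arccos, hsq, Real.sqrt_sq_eq_abs, abs_div, abs_of_pos hN]

theorem sin_vecAngle_mul_dotProduct (hP : 0 < (of ![u, w]).det) :
    Real.sin (vecAngle u w) * (u ⬝ᵥ w) = Real.cos (vecAngle u w) * (of ![u, w]).det := by
  rw [cos_vecAngle hP.ne', sin_vecAngle hP.ne', abs_of_pos hP]
  ring

end Angle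

theorem sq_le_mul_of_abs_le_abs {R : Type*} [Ring R] [LinearOrder R] [IsStrictOrderedRing R]
    {a b : R} (h : |a| ≤ |b|) (hab : 0 ≤ a * b) : a ^ 2 ≤ a * b :=
  calc a ^ 2 = |a| * |a| := by rw [abs_mul_abs_self, sq]
    _ ≤ |a| * |b| := mul_le_mul_of_nonneg_left h (abs_nonneg a)
    _ = a * b := by rw [← abs_mul, abs_of_nonneg hab]

section RotatedEigenbasis

variable {M : Matrix (Fin 2) (Fin 2) ℝ} {u w : Fin 2 → ℝ} {l₁ l₂ : ℝ}
  (hu : M *ᵥ u = l₁ • u) (hw : M *ᵥ w = l₂ • w)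
include hu hw

theorem trace_rotationMatrix_vecAngle_mul (hP : 0 < (of ![u, w]).det) :
    (rotationMatrix (vecAngle u w) * M).trace = 2 * l₂ * Real.cos (vecAngle u w) := by
  refine mul_left_cancel₀ hP.ne' ?_
  rw [trace_rotationMatrix_mul]
  linear_combination Real.cos (vecAngle u w) * det_of_mul_trace_of_mulVec_eq_smul hu hw +
    Real.sin (vecAngle u w) * det_of_mul_sub_of_mulVec_eq_smul hu hw +
    (l₂ - l₁) * sin_vecAngle_mul_dotProduct hP

theorem trace_rotationMatrix_neg_vecAngle_mul (hP : 0 < (of ![u, w]).det) :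
    (rotationMatrix (-vecAngle u w) * M).trace = 2 * l₁ * Real.cos (vecAngle u w) := by
  refine mul_left_cancel₀ hP.ne' ?_
  rw [trace_rotationMatrix_mul, Real.cos_neg, Real.sin_neg]
  linear_combination Real.cos (vecAngle u w) * det_of_mul_trace_of_mulVec_eq_smul hu hw -
    Real.sin (vecAngle u w) * det_of_mul_sub_of_mulVec_eq_smul hu hw -
    (l₂ - l₁) * sin_vecAngle_mul_dotProduct hP

theorem exists_abs_eq_vecAngle_im_ne_zero_mem_spectrum (hdet : 0 < M.det)
    (hP : (of ![u, w]).det ≠ 0) :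
    ∃ θ, |θ| = vecAngle u w ∧ ∃ z : ℂ, z.im ≠ 0 ∧
      z ∈ spectrum ℂ ((rotationMatrix θ * M).map (algebraMap ℝ ℂ)) := by
  wlog hPpos : 0 < (of ![u, w]).det generalizing u w l₁ l₂
  · have hswap : (of ![w, u]).det = -(of ![u, w]).det := by simp only [det_of_fin_two]; ring
    rw [vecAngle_comm]
    exact this hw hu (by rwa [hswap, neg_ne_zero])
      (by rw [hswap, neg_pos]; exact (not_lt.1 hPpos).lt_of_ne hP)
  set β := vecAngle u w
  have hl : M.det = l₁ * l₂ := det_eq_mul_of_mulVec_eq_smul hu hw hP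
  have hl₁l₂ : 0 ≤ l₁ * l₂ := hl ▸ hdet.le
  have hβ : |β| = β := abs_of_nonneg (Real.arccos_nonneg _)
  obtain ⟨θ, l, hθ, hl0, hl2, htr⟩ : ∃ θ l, |θ| = β ∧ l ≠ 0 ∧ l ^ 2 ≤ M.det ∧
      (rotationMatrix θ * M).trace = 2 * l * Real.cos β := by
    rcases le_total |l₁| |l₂| with h | h
    · refine ⟨-β, l₁, by rw [abs_neg, hβ], left_ne_zero_of_mul (hl ▸ hdet.ne'), ?_,
        trace_rotationMatrix_neg_vecAngle_mul hu hw hPpos⟩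
      rw [hl]
      exact sq_le_mul_of_abs_le_abs h hl₁l₂
    · refine ⟨β, l₂, hβ, right_ne_zero_of_mul (hl ▸ hdet.ne'), ?_,
        trace_rotationMatrix_vecAngle_mul hu hw hPpos⟩
      rw [hl, mul_comm]
      exact sq_le_mul_of_abs_le_abs h (by rwa [mul_comm])
  have hsin : 0 < Real.sin β := by
    rw [sin_vecAngle hP]
    exact div_pos (abs_pos.2 hP) (sqrt_mul_sqrt_dotProduct_self_pos hP)
  refine ⟨θ, hθ, exists_im_ne_zero_mem_spectrum_of_sq_trace_lt _ ?_⟩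
  rw [htr, det_rotationMatrix_mul]
  calc (2 * l * Real.cos β) ^ 2 = 4 * l ^ 2 - 4 * (l ^ 2 * Real.sin β ^ 2) := by
        linear_combination 4 * l ^ 2 * Real.cos_sq_add_sin_sq β
    _ < 4 * l ^ 2 := by linarith [mul_pos (sq_pos_of_ne_zero hl0) (pow_pos hsin 2)]
    _ ≤ 4 * M.det := by linarith

end RotatedEigenbasis

theorem stmt8_general (α : ℝ) (M : Matrix (Fin 2) (Fin 2) ℝ) (hdet : 0 < M.det)
    (u w : Fin 2 → ℝ) (hu : u ≠ 0)
    (l1 l2 : ℝ) (hMu : M.mulVec u = l1 • u) (hMw : M.mulVec w = l2 • w)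
    (hind : ¬ ∃ c : ℝ, w = c • u)
    (hangle : vecAngle u w < α) :
    ∃ s : ℝ, s ∈ Set.Icc (-1 : ℝ) 1 ∧ ∃ z : ℂ, z.im ≠ 0 ∧
      z ∈ spectrum ℂ
        ((!![Real.cos (s * α), -Real.sin (s * α); Real.sin (s * α), Real.cos (s * α)] * M).map
          (algebraMap ℝ ℂ)) := by
  have hP : (of ![u, w]).det ≠ 0 := by
    rw [← isUnit_iff_ne_zero, ← isUnit_iff_isUnit_det, ← linearIndependent_rows_iff_isUnit]
    exact (LinearIndependent.pair_iff' hu).2 fun c hc ↦ hind ⟨c, hc.symm⟩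
  obtain ⟨θ, hθ, hspec⟩ := exists_abs_eq_vecAngle_im_ne_zero_mem_spectrum hMu hMw hdet hP
  have hα : 0 < α := (abs_nonneg θ).trans_lt (hθ ▸ hangle)
  refine ⟨θ / α, ?_, ?_⟩
  · rw [Set.mem_Icc, ← abs_le, abs_div, abs_of_pos hα, div_le_one hα, hθ]
    exact hangle.le
  · rwa [div_mul_cancel₀ θ hα.ne']

theorem stmt8 (α : ℝ) (hα : 0 < α) (M : Matrix (Fin 2) (Fin 2) ℝ) (hdet : 0 < M.det)
    (u w : Fin 2 → ℝ) (hu : u ≠ 0) (hw : w ≠ 0)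
    (l1 l2 : ℝ) (hMu : M.mulVec u = l1 • u) (hMw : M.mulVec w = l2 • w)
    (hind : ¬ ∃ c : ℝ, w = c • u)
    (hangle : vecAngle u w < α) :
    ∃ s : ℝ, s ∈ Set.Icc (-1 : ℝ) 1 ∧ ∃ z : ℂ, z.im ≠ 0 ∧
      z ∈ spectrum ℂ
        ((!![Real.cos (s * α), -Real.sin (s * α); Real.sin (s * α), Real.cos (s * α)] * M).map
          (algebraMap ℝ ℂ)) :=
  stmt8_general α M hdet u w hu l1 l2 hMu hMw hind hangle
end
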